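/- arXiv:math/0409383 — 4 statements merged into one kernel-verified Lean document; each statement's English description precedes it below -/
import Mathlib

section
/- There is no pair of positive integers (d, a) satisfying d³ + 3d² = 2(a² + a + 1). -/
/-- Any natural number ≡ 2 mod 3 has a prime factor ≡ 2 mod 3. -/
lemma exists_prime_fac_two_mod_three (n : ℕ) (h : n % 3 = 2) :
    ∃ q : ℕ, q.Prime ∧ q ∣ n ∧ q % 3 = 2 := by
  induction n using Nat.strong_induction_on with
  | _ n ih =>
    have hn1 : 1 < n := by omega
    set p := n.minFac with hpdef
    have hp : p.Prime := Nat.minFac_prime (by omega)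
    have hpd : p ∣ n := Nat.minFac_dvd n
    by_cases hp3 : p % 3 = 2
    · exact ⟨p, hp, hpd, hp3⟩
    · obtain ⟨m, hm⟩ := hpd
      have hp1 : p % 3 = 1 := by
        by_cases h0 : p % 3 = 0
        · exfalso
          have h3p : 3 ∣ p := Nat.dvd_of_mod_eq_zero h0
          have : p = 3 := ((Nat.prime_dvd_prime_iff_eq (by norm_num) hp).mp h3p).symm
          have : 3 ∣ n := this ▸ Nat.minFac_dvd n
          omega
        · omega
      have hm3 : m % 3 = 2 := by
        have h' : (p % 3 * (m % 3)) % 3 = 2 := by rw [← Nat.mul_mod, ← hm]; exact h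
        rw [hp1, one_mul] at h'
        omega
      have hp2 : 2 ≤ p := hp.two_le
      have hm0 : 0 < m := by
        rcases Nat.eq_zero_or_pos m with h0 | h0
        · subst h0; omega
        · exact h0
      have hmlt : m < n := by
        have : n = p * m := hm
        nlinarith
      obtain ⟨q, hq, hqd, hq3⟩ := ih m hmlt hm3
      exact ⟨q, hq, hqd.trans (Dvd.intro_left p hm.symm), hq3⟩

theorem no_positive_solutions :
    ¬ ∃ d a : ℤ, 0 < d ∧ 0 < a ∧ d ^ 3 + 3 * d ^ 2 = 2 * (a ^ 2 + a + 1) := by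
  rintro ⟨d, a, hd, ha, h⟩
  -- mod 4 : d ≡ 3 (mod 4)
  have key4 : ∀ x y : ZMod 4, x ^ 3 + 3 * x ^ 2 = 2 * (y ^ 2 + y + 1) → x = 3 := by decide
  have h4 : ((d : ZMod 4)) ^ 3 + 3 * (d : ZMod 4) ^ 2
      = 2 * ((a : ZMod 4) ^ 2 + (a : ZMod 4) + 1) := by
    have := congrArg (fun z : ℤ => (z : ZMod 4)) h
    push_cast at this
    exact this
  have hd4 : (d : ZMod 4) = ((3 : ℤ) : ZMod 4) := by
    have := key4 _ _ h4; rw [this]; norm_num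
  have hd4' : d % 4 = 3 := by
    have := (ZMod.intCast_eq_intCast_iff' d 3 4).mp hd4
    omega
  -- mod 9 : d ≡ 2 (mod 3)
  have key9 : ∀ x y : ZMod 9, x ^ 3 + 3 * x ^ 2 = 2 * (y ^ 2 + y + 1) →
      x = 2 ∨ x = 5 ∨ x = 8 := by decide
  have h9 : ((d : ZMod 9)) ^ 3 + 3 * (d : ZMod 9) ^ 2
      = 2 * ((a : ZMod 9) ^ 2 + (a : ZMod 9) + 1) := by
    have := congrArg (fun z : ℤ => (z : ZMod 9)) h
    push_cast at this
    exact this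
  have hd9' : d % 9 = 2 ∨ d % 9 = 5 ∨ d % 9 = 8 := by
    rcases key9 _ _ h9 with h' | h' | h'
    · left
      have : (d : ZMod 9) = ((2 : ℤ) : ZMod 9) := by rw [h']; norm_num
      have := (ZMod.intCast_eq_intCast_iff' d 2 9).mp this; omega
    · right; left
      have : (d : ZMod 9) = ((5 : ℤ) : ZMod 9) := by rw [h']; norm_num
      have := (ZMod.intCast_eq_intCast_iff' d 5 9).mp this; omega
    · right; right
      have : (d : ZMod 9) = ((8 : ℤ) : ZMod 9) := by rw [h']; norm_num
      have := (ZMod.intCast_eq_intCast_iff' d 8 9).mp this; omega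
  -- pass to naturals
  set n : ℕ := d.toNat with hndef
  have hdn : d = (n : ℤ) := by omega
  have hn3 : n % 3 = 2 := by omega
  have hn2 : n % 2 = 1 := by omega
  obtain ⟨q, hq, hqd, hq3⟩ := exists_prime_fac_two_mod_three n hn3
  have hq2 : q ≠ 2 := by
    intro h2
    subst h2
    have := Nat.mod_mod_of_dvd n (by norm_num : (2:ℕ) ∣ 2)
    obtain ⟨m, hm⟩ := hqd
    omega
  have hq3' : q ≠ 3 := by omega
  -- q divides a^2 + a + 1
  have hqdZ : (q : ℤ) ∣ d := hdn ▸ Int.natCast_dvd_natCast.mpr hqd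
  have hqZprime : Prime (q : ℤ) := Nat.prime_iff_prime_int.mp hq
  have hqdvd2 : (q : ℤ) ∣ 2 * (a ^ 2 + a + 1) := by
    rw [← h]
    have : d ^ 3 + 3 * d ^ 2 = d * (d ^ 2 + 3 * d) := by ring
    rw [this]
    exact Dvd.dvd.mul_right hqdZ _
  have hqnd2 : ¬ (q : ℤ) ∣ 2 := by
    intro hcon
    have hqn : q ∣ 2 := by exact_mod_cast hcon
    have := Nat.le_of_dvd (by norm_num) hqn
    have := hq.two_le
    omega
  have hqa : (q : ℤ) ∣ a ^ 2 + a + 1 := by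
    rcases hqZprime.dvd_mul.mp hqdvd2 with h' | h'
    · exact absurd h' hqnd2
    · exact h'
  -- work in ZMod q
  haveI : Fact q.Prime := ⟨hq⟩
  set x : ZMod q := (a : ZMod q) with hxdef
  have hx : x ^ 2 + x + 1 = 0 := by
    have := (ZMod.intCast_zmod_eq_zero_iff_dvd (a ^ 2 + a + 1) q).mpr hqa
    push_cast at this
    exact this
  have hx3 : x ^ 3 = 1 := by linear_combination (x - 1) * hx
  have hfermat : x ^ q = x := ZMod.pow_card x
  have hq32 : q = 3 * (q / 3) + 2 := by omega
  have hx2 : x ^ 2 = x := by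
    calc x ^ 2 = (x ^ 3) ^ (q / 3) * x ^ 2 := by rw [hx3]; ring
    _ = x ^ (3 * (q / 3) + 2) := by rw [pow_add, pow_mul]
    _ = x ^ q := by rw [← hq32]
    _ = x := hfermat
  have hx1 : x = 1 := by
    have h1 : x ^ 2 = 1 := by
      calc x ^ 2 = x * x := sq x
      _ = x * x ^ 2 := by rw [hx2]
      _ = x ^ 3 := by ring
      _ = 1 := hx3
    rw [← hx2, h1]
  have h3 : (3 : ZMod q) = 0 := by
    have := hx
    rw [hx1] at this
    linear_combination this
  have : (q : ℕ) ∣ 3 := by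
    have := (ZMod.natCast_eq_zero_iff 3 q).mp (by exact_mod_cast h3)
    exact this
  have : q = 3 := (Nat.prime_dvd_prime_iff_eq hq (by norm_num)).mp this
  exact hq3' this
end

section
/- For every integer d ≥ 2, the integer 2d³ + 6d² - 3 is not the square of an odd integer. Equivalently, there is no integer m with m odd and m² = 2d³ + 6d² - 3. -/
/-- Every natural number that is 2 mod 3 has a prime factor that is 2 mod 3. -/
lemma exists_prime_two_mod_three : ∀ n : ℕ, n % 3 = 2 →
    ∃ p, Nat.Prime p ∧ p ∣ n ∧ p % 3 = 2 := by
  intro n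
  induction n using Nat.strong_induction_on with
  | _ n ih =>
    intro hn
    have h1 : n ≠ 1 := by omega
    obtain ⟨p, hp, hpd⟩ := Nat.exists_prime_and_dvd h1
    by_cases hp2 : p % 3 = 2
    · exact ⟨p, hp, hpd, hp2⟩
    have hp0 : p % 3 ≠ 0 := by
      intro h0
      have h3 : (3 : ℕ) ∣ p := by omega
      have : p = 3 := ((Nat.prime_dvd_prime_iff_eq Nat.prime_three hp).mp h3).symm
      subst this
      obtain ⟨c, hc⟩ := hpd
      omega
    have hp1 : p % 3 = 1 := by omega
    obtain ⟨c, hc⟩ := hpd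
    have hc3 : c % 3 = 2 := by
      have hmod : n % 3 = (p % 3) * (c % 3) % 3 := by rw [hc, Nat.mul_mod]
      rw [hp1] at hmod
      omega
    have hclt : c < n := by
      have h2c : 2 * c ≤ p * c := Nat.mul_le_mul_right c hp.two_le
      omega
    obtain ⟨q, hq, hqd, hq2⟩ := ih c hclt hc3
    exact ⟨q, hq, hqd.trans ⟨p, by rw [hc]; ring⟩, hq2⟩

/-- A prime that is 2 mod 3 cannot divide t² + t + 1. -/
lemma prime_two_mod_three_not_dvd (p : ℕ) (hp : Nat.Prime p) (hp2 : p % 3 = 2)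
    (t : ℤ) : ¬ (p : ℤ) ∣ t ^ 2 + t + 1 := by
  intro h
  haveI := Fact.mk hp
  have h0 : ((t : ZMod p)) ^ 2 + (t : ZMod p) + 1 = 0 := by
    have := (ZMod.intCast_zmod_eq_zero_iff_dvd _ p).mpr h
    push_cast at this
    exact this
  set u : ZMod p := (t : ZMod p) with hu
  have hu3 : u ^ 3 = 1 := by linear_combination (u - 1) * h0
  have hu1 : u ≠ 1 := by
    intro h1
    rw [h1] at h0
    have h3 : ((3 : ℕ) : ZMod p) = 0 := by push_cast; linear_combination h0
    have := (ZMod.natCast_eq_zero_iff 3 p).mp h3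
    have : p = 3 := (Nat.prime_dvd_prime_iff_eq hp Nat.prime_three).mp this
    omega
  have hu0 : u ≠ 0 := by
    intro h'
    rw [h'] at h0
    simp at h0
  have hord : orderOf u = 3 := by
    have hdvd : orderOf u ∣ 3 := orderOf_dvd_of_pow_eq_one hu3
    rcases (Nat.dvd_prime Nat.prime_three).mp hdvd with h | h
    · exact absurd (orderOf_eq_one_iff.mp h) hu1
    · exact h
  have hpow : u ^ (p - 1) = 1 := ZMod.pow_card_sub_one_eq_one hu0
  have h3d : (3 : ℕ) ∣ p - 1 := hord ▸ orderOf_dvd_of_pow_eq_one hpow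
  have := hp.two_le
  omega

theorem not_odd_square (d : ℤ) (hd : 2 ≤ d) :
    ¬ ∃ m : ℤ, Odd m ∧ m ^ 2 = 2 * d ^ 3 + 6 * d ^ 2 - 3 := by
  rintro ⟨m, hm, heq⟩
  obtain ⟨t, ht⟩ := hm
  -- reduce mod 9 to get d ≡ 2 mod 3
  have h9 : ((m : ZMod 9)) ^ 2 = 2 * (d : ZMod 9) ^ 3 + 6 * (d : ZMod 9) ^ 2 - 3 := by
    have := congrArg (fun z : ℤ => (z : ZMod 9)) heq
    push_cast at this
    exact this
  have key : ∀ a b : ZMod 9, b ^ 2 = 2 * a ^ 3 + 6 * a ^ 2 - 3 →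
      a = 2 ∨ a = 5 ∨ a = 8 := by decide
  have hd3 : d % 3 = 2 := by
    rcases key _ _ h9 with h | h | h
    · have h' : (d : ZMod 9) = ((2 : ℤ) : ZMod 9) := by exact_mod_cast h
      have := (ZMod.intCast_eq_intCast_iff d 2 9).mp h'
      simp only [Int.ModEq] at this
      omega
    · have h' : (d : ZMod 9) = ((5 : ℤ) : ZMod 9) := by exact_mod_cast h
      have := (ZMod.intCast_eq_intCast_iff d 5 9).mp h'
      simp only [Int.ModEq] at this
      omega
    · have h' : (d : ZMod 9) = ((8 : ℤ) : ZMod 9) := by exact_mod_cast h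
      have := (ZMod.intCast_eq_intCast_iff d 8 9).mp h'
      simp only [Int.ModEq] at this
      omega
  -- key factorization: 2(t²+t+1) = d²(d+3)
  have h1 : 2 * (t ^ 2 + t + 1) = d ^ 2 * (d + 3) := by
    have : (2 * t + 1) ^ 2 = 2 * d ^ 3 + 6 * d ^ 2 - 3 := by rw [← ht]; exact heq
    linarith [this, sq_nonneg t]
  -- d is odd
  have hdodd : Odd d := by
    rcases Int.even_or_odd d with he | ho
    · exfalso
      obtain ⟨e, hde⟩ := he
      have heq2 : t ^ 2 + t + 1 = 2 * (e ^ 2 * (d + 3)) := by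
        have : 2 * (t ^ 2 + t + 1) = (e + e) ^ 2 * (d + 3) := by rw [← hde]; exact h1
        nlinarith [this]
      have hev : Even (t * (t + 1)) := Int.even_mul_succ_self t
      obtain ⟨c, hc⟩ := hev
      have : t ^ 2 + t = c + c := by nlinarith [hc]
      omega
    · exact ho
  obtain ⟨f, hf⟩ := hdodd
  -- t² + t + 1 = d² * (f + 2)
  have h2 : t ^ 2 + t + 1 = d ^ 2 * (f + 2) := by nlinarith [h1, hf]
  -- find a prime p ≡ 2 mod 3 dividing d
  have hn3 : d.toNat % 3 = 2 := by omega
  obtain ⟨p, hp, hpd, hp2⟩ := exists_prime_two_mod_three d.toNat hn3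
  have hpdz : (p : ℤ) ∣ d := by
    have : ((d.toNat : ℤ)) = d := Int.toNat_of_nonneg (by omega)
    rw [← this]
    exact_mod_cast hpd
  have hpdvd : (p : ℤ) ∣ t ^ 2 + t + 1 := by
    rw [h2]
    exact Dvd.dvd.mul_right (hpdz.trans (dvd_pow_self d (by norm_num))) _
  exact prime_two_mod_three_not_dvd p hp hp2 t hpdvd
end

section
/- For n ≥ 1 and variables Z = (Z₁,...,Z_{n-1}), define F_n(p, Z) = ∑_{I ⊆ [n-1]} b_{n,I}(p^{-1}) ∏_{i∈I} Z_i/(1 - Z_i), where b_{n,I}(p) is the product of Gaussian binomials for the flag type I. Then F_n(p^{-1}, Z^{-1}) = (-1)^{n-1} p^{C(n,2)} F_n(p, Z), as an identity of rational functions in p and the Z_i. -/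
/-!
Since `Z⁻¹/(1 - Z⁻¹) = -(1 + Z/(1 - Z))`, expanding the products turns `F_n(p⁻¹, Z⁻¹)` into
`∑_K (∑_{K ⊆ I} (-1)^|I| b_{n,I}(p)) ∏_{i∈K} Z_i/(1 - Z_i)`, so it suffices that this
alternating sum over the supersets `I` of `K` equals `(-1)^{n-1} p^{C(n,2)} b_{n,K}(p⁻¹)`.
Splitting off the largest element `j` of `I` gives a recursion in `n`; with the induction
hypothesis inserted, the claim becomes the orthogonality relation
`∑_j (-1)^j q^{C(j,2)} [n,j]_q [j,k]_{q⁻¹} = 0` for `k ≠ n`. That relation follows from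
`[j,k]_{q⁻¹} = q^{-k(j-k)} [j,k]_q`, the trinomial rule `[n,j][j,k] = [n,k][n-k,j-k]`, and
Gauss's identity `∑_t (-1)^t q^{C(t,2)} [m,t]_q = 0` for `m ≥ 1`.
-/

/-- Gaussian binomial coefficient `binom(a,b)_q = ∏_{i=0}^{b-1} (q^a - q^i)/(q^b - q^i)`. -/
noncomputable def gbinomR (q : ℝ) (a b : ℕ) : ℝ :=
  ∏ i ∈ Finset.range b, (q ^ a - q ^ i) / (q ^ b - q ^ i)

/-- `b_{n,I}(q) = binom(n,i_m)_q · binom(i_m,i_{m-1})_q ··· binom(i₂,i₁)_q` for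
`I = {i₁ < ... < i_m}`. -/
noncomputable def bnI (q : ℝ) (n : ℕ) (I : Finset ℕ) : ℝ :=
  let l := I.sort (· ≤ ·)
  ∏ r ∈ Finset.range l.length, gbinomR q (l.getD (r + 1) n) (l.getD r 0)

/-- `F_n(p, Z) = ∑_{I ⊆ [n-1]} b_{n,I}(p⁻¹) ∏_{i∈I} Z_i/(1 - Z_i)`. -/
noncomputable def Fn (p : ℝ) (n : ℕ) (Z : ℕ → ℝ) : ℝ :=
  ∑ I ∈ (Finset.Icc 1 (n - 1)).powerset,
    bnI p⁻¹ n I * ∏ i ∈ I, Z i / (1 - Z i)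

open Finset

lemma Nat.add_choose_two (k t : ℕ) : (k + t).choose 2 = k.choose 2 + t.choose 2 + k * t := by
  apply Nat.cast_injective (R := ℚ)
  push_cast [Nat.cast_choose_two]
  ring

/-- `(-1)ᵐ (q; q)ₘ = (q - 1)ᵐ [m]_q!`. -/
noncomputable def qPoch (q : ℝ) (m : ℕ) : ℝ :=
  ∏ i ∈ range m, (q ^ (i + 1) - 1)

section GaussianBinomial

variable {q : ℝ}

lemma qPoch_succ (q : ℝ) (m : ℕ) : qPoch q (m + 1) = qPoch q m * (q ^ (m + 1) - 1) :=
  prod_range_succ _ _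

lemma qPoch_ne_zero (hq0 : 0 < q) (hq1 : q ≠ 1) (m : ℕ) : qPoch q m ≠ 0 :=
  prod_ne_zero_iff.2 fun i _ =>
    sub_ne_zero.2 fun h => hq1 ((pow_eq_one_iff_of_nonneg hq0.le i.succ_ne_zero).1 h)

lemma gbinomR_zero_right (q : ℝ) (a : ℕ) : gbinomR q a 0 = 1 := by
  simp [gbinomR]

lemma gbinomR_eq_zero_of_lt (q : ℝ) {a b : ℕ} (h : a < b) : gbinomR q a b = 0 :=
  prod_eq_zero (mem_range.2 h) (by simp)

lemma gbinomR_self (hq0 : 0 < q) (hq1 : q ≠ 1) (a : ℕ) : gbinomR q a a = 1 :=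
  prod_eq_one fun _ hi =>
    div_self (sub_ne_zero.2 ((pow_right_injective₀ hq0 hq1).ne (mem_range.1 hi).ne'))

lemma gbinomR_add_eq_qPoch_div (hq0 : 0 < q) (hq1 : q ≠ 1) (b c : ℕ) :
    gbinomR q (b + c) b = qPoch q (b + c) / (qPoch q b * qPoch q c) := by
  have hq : q ≠ 0 := hq0.ne'
  -- after factoring out `qⁱ` and reflecting `i ↦ b - 1 - i`, numerator and denominator become
  -- runs of consecutive factors `qᵐ - 1`
  have hfactor : ∀ i ∈ range b, (q ^ (b + c) - q ^ i) / (q ^ b - q ^ i)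
      = (q ^ (c + (b - 1 - i) + 1) - 1) / (q ^ (b - 1 - i + 1) - 1) := by
    intro i hi
    have hib := mem_range.1 hi
    rw [show b + c = c + (b - 1 - i) + 1 + i by omega, show b = b - 1 - i + 1 + i by omega,
      pow_add, pow_add q _ i, ← sub_one_mul, ← sub_one_mul,
      mul_div_mul_right _ _ (pow_ne_zero _ hq)]
    simp only [show b - 1 - i + 1 + i - 1 - i = b - 1 - i by omega]
  have hsplit : qPoch q (b + c) = qPoch q c * ∏ i ∈ range b, (q ^ (c + i + 1) - 1) := by
    rw [qPoch, qPoch, add_comm, prod_range_add]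
  rw [gbinomR, prod_congr rfl hfactor, prod_div_distrib,
    prod_range_reflect (fun j => q ^ (c + j + 1) - 1),
    prod_range_reflect (fun j => q ^ (j + 1) - 1), ← qPoch, hsplit]
  field_simp [qPoch_ne_zero hq0 hq1 b, qPoch_ne_zero hq0 hq1 c]

lemma gbinomR_succ_succ (hq0 : 0 < q) (hq1 : q ≠ 1) (a b : ℕ) :
    gbinomR q (a + 1) (b + 1) = q ^ (b + 1) * gbinomR q a (b + 1) + gbinomR q a b := by
  rcases lt_trichotomy b a with hba | rfl | hab
  · obtain ⟨c, rfl⟩ : ∃ c, a = b + 1 + c := ⟨a - b - 1, by omega⟩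
    have hψ := qPoch_ne_zero hq0 hq1
    have hψ1 : ∀ m, q ^ (m + 1) - 1 ≠ 0 := fun m =>
      sub_ne_zero.2 ((pow_eq_one_iff_of_nonneg hq0.le m.succ_ne_zero).not.2 hq1)
    rw [show b + 1 + c + 1 = b + 1 + (c + 1) by ring, gbinomR_add_eq_qPoch_div hq0 hq1,
      gbinomR_add_eq_qPoch_div hq0 hq1, show b + 1 + c = b + (c + 1) by ring,
      gbinomR_add_eq_qPoch_div hq0 hq1, show b + 1 + (c + 1) = b + (c + 1) + 1 by ring,
      qPoch_succ q (b + (c + 1)), qPoch_succ q b, qPoch_succ q c]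
    field_simp [hψ b, hψ c, hψ1 b, hψ1 c]
    ring
  · rw [gbinomR_self hq0 hq1, gbinomR_self hq0 hq1, gbinomR_eq_zero_of_lt q b.lt_succ_self]
    ring
  · rw [gbinomR_eq_zero_of_lt q (by omega), gbinomR_eq_zero_of_lt q (by omega),
      gbinomR_eq_zero_of_lt q hab]
    ring

lemma gbinomR_inv (hq : q ≠ 0) (a b : ℕ) :
    gbinomR q⁻¹ a b = (q ^ b / q ^ a) ^ b * gbinomR q a b := by
  have hfactor : ∀ i ∈ range b, (q⁻¹ ^ a - q⁻¹ ^ i) / (q⁻¹ ^ b - q⁻¹ ^ i)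
      = q ^ b / q ^ a * ((q ^ a - q ^ i) / (q ^ b - q ^ i)) := by
    intro i _
    have hz : q ^ i ≠ 0 := pow_ne_zero _ hq
    rw [inv_pow, inv_pow, inv_pow, inv_sub_inv (pow_ne_zero _ hq) hz,
      inv_sub_inv (pow_ne_zero _ hq) hz, div_div_div_eq, div_mul_div_comm,
      show (q ^ i - q ^ a) * (q ^ b * q ^ i) = q ^ b * (q ^ a - q ^ i) * -q ^ i by ring,
      show q ^ a * q ^ i * (q ^ i - q ^ b) = q ^ a * (q ^ b - q ^ i) * -q ^ i by ring,
      mul_div_mul_right _ _ (neg_ne_zero.2 hz)]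
  rw [gbinomR, prod_congr rfl hfactor, prod_mul_distrib, prod_const, card_range, gbinomR]

lemma gbinomR_mul_gbinomR (hq0 : 0 < q) (hq1 : q ≠ 1) (n k t : ℕ) :
    gbinomR q n (k + t) * gbinomR q (k + t) k = gbinomR q n k * gbinomR q (n - k) t := by
  rcases lt_or_ge n (k + t) with hn | hn
  · rw [gbinomR_eq_zero_of_lt q hn, zero_mul]
    rcases lt_or_ge n k with hnk | hnk
    · rw [gbinomR_eq_zero_of_lt q hnk, zero_mul]
    · rw [gbinomR_eq_zero_of_lt q (by omega : n - k < t), mul_zero]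
  obtain ⟨s, rfl⟩ : ∃ s, n = k + t + s := ⟨n - (k + t), by omega⟩
  have hψ := qPoch_ne_zero hq0 hq1
  rw [gbinomR_add_eq_qPoch_div hq0 hq1, gbinomR_add_eq_qPoch_div hq0 hq1, add_assoc,
    gbinomR_add_eq_qPoch_div hq0 hq1, Nat.add_sub_cancel_left, gbinomR_add_eq_qPoch_div hq0 hq1]
  field_simp [hψ]

lemma sum_range_neg_one_pow_mul_gbinomR (hq0 : 0 < q) (hq1 : q ≠ 1) (m : ℕ) :
    ∑ t ∈ range (m + 2), (-1) ^ t * q ^ t.choose 2 * gbinomR q (m + 1) t = 0 := by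
  set f : ℕ → ℝ := fun t => (-1) ^ t * q ^ (t + 1).choose 2 * gbinomR q m t
  have hterm : ∀ t ∈ range (m + 1),
      (-1) ^ (t + 1) * q ^ (t + 1).choose 2 * gbinomR q (m + 1) (t + 1) = f (t + 1) - f t := by
    intro t _
    have hchoose : (t + 1 + 1).choose 2 = (t + 1).choose 2 + (t + 1) := by
      simp [Nat.add_choose_two (t + 1) 1]
    simp only [f, gbinomR_succ_succ hq0 hq1, hchoose]
    ring
  rw [sum_range_succ', sum_congr rfl hterm, sum_range_sub]
  simp [f, gbinomR_eq_zero_of_lt, gbinomR_zero_right]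

lemma sum_range_gbinomR_mul_gbinomR_inv (hq0 : 0 < q) (hq1 : q ≠ 1) {n k : ℕ} (hkn : k ≠ n) :
    ∑ j ∈ range (n + 1), (-1) ^ j * q ^ j.choose 2 * gbinomR q n j * gbinomR q⁻¹ j k = 0 := by
  obtain hnk | hkn := hkn.symm.lt_or_gt
  · exact sum_eq_zero fun j hj => by
      rw [gbinomR_eq_zero_of_lt q⁻¹ ((Nat.lt_succ_iff.1 (mem_range.1 hj)).trans_lt hnk), mul_zero]
  obtain ⟨m, rfl⟩ : ∃ m, n = k + (m + 1) := ⟨n - k - 1, by omega⟩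
  have hterm : ∀ t ∈ range (m + 2),
      (-1) ^ (k + t) * q ^ (k + t).choose 2 * gbinomR q (k + (m + 1)) (k + t)
          * gbinomR q⁻¹ (k + t) k
      = (-1) ^ k * q ^ k.choose 2 * gbinomR q (k + (m + 1)) k
        * ((-1) ^ t * q ^ t.choose 2 * gbinomR q (m + 1) t) := by
    intro t _
    have hpow :
        q ^ (k + t).choose 2 * (q ^ k / q ^ (k + t)) ^ k = q ^ k.choose 2 * q ^ t.choose 2 := by
      rw [pow_add q k t, div_mul_cancel_left₀ (pow_ne_zero _ hq0.ne'), Nat.add_choose_two, pow_add,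
        pow_mul', inv_pow, mul_inv_cancel_right₀ (pow_ne_zero _ (pow_ne_zero _ hq0.ne')), pow_add]
    have htri := gbinomR_mul_gbinomR hq0 hq1 (k + (m + 1)) k t
    rw [Nat.add_sub_cancel_left] at htri
    rw [gbinomR_inv hq0.ne', pow_add]
    linear_combination
      ((-1) ^ k * (-1) ^ t * gbinomR q (k + (m + 1)) (k + t) * gbinomR q (k + t) k) * hpow
        + ((-1) ^ k * (-1) ^ t * q ^ k.choose 2 * q ^ t.choose 2) * htri
  rw [show k + (m + 1) + 1 = k + (m + 2) by ring, sum_range_add, sum_congr rfl hterm, ← mul_sum,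
    sum_range_neg_one_pow_mul_gbinomR hq0 hq1, mul_zero, add_zero]
  exact sum_eq_zero fun j hj => by rw [gbinomR_eq_zero_of_lt q⁻¹ (mem_range.1 hj), mul_zero]

end GaussianBinomial

lemma sort_insert_of_forall_lt {α : Type*} [LinearOrder α] {I : Finset α} {j : α}
    (h : ∀ x ∈ I, x < j) : (insert j I).sort (· ≤ ·) = I.sort (· ≤ ·) ++ [j] := by
  refine List.Perm.eq_of_pairwise' (pairwise_sort _ _)
    (List.pairwise_append.2 ⟨pairwise_sort _ _, List.pairwise_singleton _ _, ?_⟩) ?_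
  · simp only [mem_sort, List.mem_singleton]
    rintro x hx _ rfl
    exact (h x hx).le
  · refine (List.perm_ext_iff_of_nodup (sort_nodup _ _) ?_).2 fun x => by simp [or_comm]
    simpa [List.nodup_append, sort_nodup] using fun x hx => (h x hx).ne

lemma prod_range_length_append_singleton {M : Type*} [CommMonoid M] (g : ℕ → ℕ → M)
    (l : List ℕ) (j n : ℕ) :
    ∏ r ∈ range (l ++ [j]).length, g ((l ++ [j]).getD (r + 1) n) ((l ++ [j]).getD r 0)
      = g n j * ∏ r ∈ range l.length, g (l.getD (r + 1) j) (l.getD r 0) := by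
  have hget : ∀ i ≤ l.length, ∀ d, (l ++ [j]).getD i d = l.getD i j := by
    intro i hi d
    rcases hi.lt_or_eq with hi | rfl
    · rw [List.getD_append _ _ _ _ hi, List.getD_eq_getElem _ _ hi, List.getD_eq_getElem _ _ hi]
    · rw [List.getD_append_right _ _ _ _ le_rfl, List.getD_eq_default _ _ le_rfl, Nat.sub_self]
      rfl
  rw [List.length_append, List.length_singleton, prod_range_succ, mul_comm, hget _ le_rfl,
    List.getD_eq_default _ _ (by simp), List.getD_eq_default _ _ le_rfl]
  congr 1
  refine prod_congr rfl fun r hr => ?_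
  rw [hget _ (mem_range.1 hr), List.getD_append _ _ _ _ (mem_range.1 hr)]

lemma bnI_empty (q : ℝ) (n : ℕ) : bnI q n ∅ = 1 := by
  simp [bnI]

lemma bnI_insert (q : ℝ) (n : ℕ) {I : Finset ℕ} {j : ℕ} (h : ∀ x ∈ I, x < j) :
    bnI q n (insert j I) = gbinomR q n j * bnI q j I := by
  simp only [bnI, sort_insert_of_forall_lt h, prod_range_length_append_singleton]

lemma bnI_erase {q : ℝ} (hq0 : 0 < q) (hq1 : q ≠ 1) {J : Finset ℕ} {k : ℕ} (hk : k ∈ J)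
    (hmax : ∀ x ∈ J, x ≤ k) (j : ℕ) :
    bnI q j (J.erase j) = gbinomR q j k * bnI q k (J.erase k) := by
  have hlt : ∀ x ∈ J.erase k, x < k := fun x hx =>
    (hmax x (mem_of_mem_erase hx)).lt_of_ne (ne_of_mem_erase hx)
  rcases lt_trichotomy j k with hjk | rfl | hkj
  · rw [← insert_erase hk, erase_insert_of_ne hjk.ne', bnI_insert q j
      fun x hx => hlt x (mem_of_mem_erase hx), gbinomR_eq_zero_of_lt q hjk, zero_mul, zero_mul]
  · rw [gbinomR_self hq0 hq1, one_mul]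
  · rw [erase_eq_of_notMem fun hj => (hmax j hj).not_gt hkj, ← bnI_insert q j hlt,
      insert_erase hk]

lemma sum_powerset_Icc_one {M : Type*} [AddCommMonoid M] (f : Finset ℕ → M) (m : ℕ) :
    ∑ I ∈ (Icc 1 m).powerset, f I
      = f ∅ + ∑ j ∈ Icc 1 m, ∑ I ∈ (Icc 1 (j - 1)).powerset, f (insert j I) := by
  induction m with
  | zero => simp
  | succ m ih =>
    have hm : m + 1 ∉ Icc 1 m := by simp
    rw [← insert_Icc_right_eq_Icc_add_one (by omega), sum_powerset_insert hm, ih,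
      sum_insert hm, Nat.add_sub_cancel, add_assoc, add_comm (∑ I ∈ (Icc 1 m).powerset, _)]

noncomputable def altSupersetSum (q : ℝ) (n : ℕ) (J : Finset ℕ) : ℝ :=
  ∑ I ∈ (Icc 1 (n - 1)).powerset with J ⊆ I, (-1) ^ #I * bnI q n I

lemma altSupersetSum_eq (q : ℝ) (n : ℕ) (J : Finset ℕ) :
    altSupersetSum q n J = (if J = ∅ then 1 else 0)
      - ∑ j ∈ Icc 1 (n - 1), gbinomR q n j * altSupersetSum q j (J.erase j) := by
  rw [altSupersetSum, sum_filter, sum_powerset_Icc_one, sub_eq_add_neg, ← sum_neg_distrib]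
  congr 1
  · simp [bnI_empty]
  refine sum_congr rfl fun j _ => ?_
  rw [altSupersetSum, sum_filter, mul_sum, ← sum_neg_distrib]
  refine sum_congr rfl fun I hI => ?_
  have hlt : ∀ x ∈ I, x < j := fun x hx => by
    have := mem_Icc.1 (mem_powerset.1 hI hx)
    omega
  simp only [subset_insert_iff, card_insert_of_notMem fun hj => (hlt j hj).false,
    bnI_insert q n hlt]
  split_ifs <;> ring

/-- Requiring `0 ∉ J` and `n ∉ J` rather than `J ⊆ [1, n - 1]` lets the induction hypothesis
apply to every `J.erase j` produced by `altSupersetSum_eq`. -/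
theorem altSupersetSum_eq_bnI_inv {q : ℝ} (hq0 : 0 < q) (hq1 : q ≠ 1) {n : ℕ} (hn : 1 ≤ n)
    {J : Finset ℕ} (h0 : 0 ∉ J) (hnJ : n ∉ J) :
    altSupersetSum q n J = (-1) ^ (n - 1) * q ^ n.choose 2 * bnI q⁻¹ n J := by
  induction n using Nat.strong_induction_on generalizing J with
  | _ n ih =>
  obtain ⟨k, c, herase, hkn, hempty⟩ : ∃ k c, (∀ j, bnI q⁻¹ j (J.erase j) = gbinomR q⁻¹ j k * c) ∧
      k ≠ n ∧ (if J = ∅ then (1 : ℝ) else 0) = gbinomR q⁻¹ 0 k * c := by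
    rcases J.eq_empty_or_nonempty with rfl | hne
    · exact ⟨0, 1, fun j => by simp [bnI_empty, gbinomR_zero_right], by omega,
        by simp [gbinomR_zero_right]⟩
    · have hk := J.max'_mem hne
      refine ⟨J.max' hne, bnI q⁻¹ (J.max' hne) (J.erase (J.max' hne)),
        bnI_erase (inv_pos.2 hq0) (inv_ne_one.2 hq1) hk (J.le_max' · ), fun h => hnJ (h ▸ hk), ?_⟩
      rw [if_neg hne.ne_empty, gbinomR_eq_zero_of_lt _ (Nat.pos_of_ne_zero fun h => h0 (h ▸ hk)),
        zero_mul]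
  set v : ℕ → ℝ := fun j => (-1) ^ j * q ^ j.choose 2 * gbinomR q n j * gbinomR q⁻¹ j k
  have hterm : ∀ j ∈ Icc 1 (n - 1),
      gbinomR q n j * altSupersetSum q j (J.erase j) = -(v j * c) := by
    intro j hj
    obtain ⟨hj1, hjn⟩ := mem_Icc.1 hj
    rw [ih j (by omega) hj1 (fun h => h0 (mem_of_mem_erase h)) (notMem_erase j J), herase]
    obtain ⟨i, rfl⟩ : ∃ i, j = i + 1 := ⟨j - 1, by omega⟩
    simp only [v, pow_succ, Nat.add_sub_cancel]
    ring
  have hsum : ∑ j ∈ range (n + 1), v j = 0 := sum_range_gbinomR_mul_gbinomR_inv hq0 hq1 hkn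
  obtain ⟨m, rfl⟩ : ∃ m, n = m + 1 := ⟨n - 1, by omega⟩
  rw [sum_range_succ, sum_range_succ', range_eq_Ico, sum_Ico_add', zero_add,
    Ico_add_one_right_eq_Icc] at hsum
  simp only [v, gbinomR_self hq0 hq1, gbinomR_zero_right, Nat.choose_zero_succ, pow_zero] at hsum
  rw [altSupersetSum_eq, sum_congr rfl hterm, hempty, ← erase_eq_of_notMem hnJ, herase,
    sum_neg_distrib, ← sum_mul, Nat.add_sub_cancel]
  simp only [v]
  linear_combination c * hsum

lemma inv_div_one_sub_inv {K : Type*} [Field K] {x : K} (h0 : x ≠ 0) (h1 : x ≠ 1) :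
    x⁻¹ / (1 - x⁻¹) = -(1 + x / (1 - x)) := by
  have h1' : 1 - x ≠ 0 := sub_ne_zero.2 h1.symm
  have h2 : x - 1 ≠ 0 := sub_ne_zero.2 h1
  field_simp
  ring

/-- Stated for real `p > 1` and `Z_i ∉ {0, 1}`, a Zariski-dense set of specializations, so it is
equivalent to the identity of rational functions. -/
theorem Fn_functional_equation (n : ℕ) (hn : 1 ≤ n) (p : ℝ) (hp : 1 < p)
    (Z : ℕ → ℝ) (hZ0 : ∀ i, Z i ≠ 0) (hZ1 : ∀ i, Z i ≠ 1) :
    Fn p⁻¹ n (fun i => (Z i)⁻¹) = (-1) ^ (n - 1) * p ^ n.choose 2 * Fn p n Z := by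
  set x : ℕ → ℝ := fun i => Z i / (1 - Z i)
  have hprod : ∀ I : Finset ℕ,
      ∏ i ∈ I, (Z i)⁻¹ / (1 - (Z i)⁻¹) = (-1) ^ #I * ∑ K ∈ I.powerset, ∏ i ∈ K, x i := by
    intro I
    rw [prod_congr rfl fun i _ => inv_div_one_sub_inv (hZ0 i) (hZ1 i), prod_neg, prod_one_add]
  calc Fn p⁻¹ n (fun i => (Z i)⁻¹)
      = ∑ I ∈ (Icc 1 (n - 1)).powerset, ∑ K ∈ I.powerset,
          (-1) ^ #I * bnI p n I * ∏ i ∈ K, x i := by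
        simp only [Fn, inv_inv, hprod, mul_sum]
        exact sum_congr rfl fun I _ => sum_congr rfl fun K _ => by ring
    _ = ∑ K ∈ (Icc 1 (n - 1)).powerset, altSupersetSum p n K * ∏ i ∈ K, x i := by
        rw [sum_comm' (t' := (Icc 1 (n - 1)).powerset)
          (s' := fun K => {I ∈ (Icc 1 (n - 1)).powerset | K ⊆ I}) fun I K => ?_]
        · simp only [altSupersetSum, sum_mul]
        simp only [mem_powerset, mem_filter]
        exact ⟨fun ⟨hIA, hKI⟩ => ⟨⟨hIA, hKI⟩, hKI.trans hIA⟩, fun ⟨h, _⟩ => h⟩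
    _ = (-1) ^ (n - 1) * p ^ n.choose 2 * Fn p n Z := by
        rw [Fn, mul_sum]
        refine sum_congr rfl fun K hK => ?_
        have hKA : ∀ i ∈ K, 1 ≤ i ∧ i ≤ n - 1 := fun i hi => mem_Icc.1 (mem_powerset.1 hK hi)
        rw [altSupersetSum_eq_bnI_inv (zero_lt_one.trans hp) hp.ne' hn
          (fun h => by have := hKA 0 h; omega) (fun h => by have := hKA n h; omega)]
        ring
end

section
/- For every integer d ≥ 2: (d³ - d² + 2)/(4d) ≤ max{ d, max_{1≤j≤C(d,2)-1} ((C(d,2)-j)(d+j)+1)/(C(d+1,2)-j) } ≤ max{ d, (d-1)(d+1)/2 }. -/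
lemma two_choose (n : ℕ) (hn : 1 ≤ n) : (n.choose 2 : ℚ) = ((n:ℚ)^2 - n)/2 := by
  have h : 2 * n.choose 2 = n * (n - 1) := by
    rw [Nat.choose_two_right]
    refine Nat.mul_div_cancel' ?_
    rcases Nat.even_or_odd n with h | h
    · exact h.two_dvd.mul_right _
    · exact (Nat.Odd.sub_odd h odd_one).two_dvd.mul_left _
  have h2 : ((2 * n.choose 2 : ℕ) : ℚ) = (n:ℚ) * ((n:ℚ) - 1) := by
    rw [h]; push_cast [hn]; ring
  push_cast at h2
  linarith [h2]

lemma even_aux (m : ℕ) (hm : 2 ≤ m) :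
    ((2*(m:ℚ))^3 - (2*(m:ℚ))^2 + 2) * (((2*(m:ℚ)+1)^2 - (2*(m:ℚ)+1))/2 - ((m:ℚ)^2 - 1)) ≤
    ((((2*(m:ℚ))^2 - 2*(m:ℚ))/2 - ((m:ℚ)^2 - 1)) * (2*(m:ℚ) + ((m:ℚ)^2 - 1)) + 1) * (4*(2*(m:ℚ))) := by
  have hq : (2:ℚ) ≤ (m:ℚ) := by exact_mod_cast hm
  have h23 : (0:ℚ) ≤ ((m:ℚ) - 2) * ((m:ℚ) - 3) := by
    rcases le_or_gt m 2 with h | h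
    · have : m = 2 := by omega
      subst this; norm_num
    · have : (3:ℚ) ≤ (m:ℚ) := by exact_mod_cast h
      nlinarith
  nlinarith [mul_nonneg (mul_nonneg (Nat.cast_nonneg m (α := ℚ)) (Nat.cast_nonneg m (α := ℚ))) h23, h23, sq_nonneg ((m:ℚ) - 2)]

lemma odd_aux (m : ℕ) (hm : 1 ≤ m) :
    ((2*(m:ℚ)+1)^3 - (2*(m:ℚ)+1)^2 + 2) * (((2*(m:ℚ)+1+1)^2 - (2*(m:ℚ)+1+1))/2 - ((m:ℚ)^2+(m:ℚ)-1)) ≤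
    ((((2*(m:ℚ)+1)^2 - (2*(m:ℚ)+1))/2 - ((m:ℚ)^2+(m:ℚ)-1)) * ((2*(m:ℚ)+1) + ((m:ℚ)^2+(m:ℚ)-1)) + 1) * (4*(2*(m:ℚ)+1)) := by
  have m0 : (0:ℚ) ≤ (m:ℚ) := by positivity
  have q0 : (1:ℚ) ≤ (m:ℚ) := by exact_mod_cast hm
  have hmn : (0:ℚ) ≤ ((m:ℚ) - 2) * (3*(m:ℚ) - 7) := by
    rcases le_or_gt m 2 with h | h
    · interval_cases m <;> norm_num
    · have : (3:ℚ) ≤ (m:ℚ) := by exact_mod_cast h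
      nlinarith
  nlinarith [mul_nonneg (mul_nonneg m0 (by linarith : (0:ℚ) ≤ (m:ℚ) - 1)) (sq_nonneg ((m:ℚ) - 2)),
    mul_nonneg m0 hmn]

lemma upper_aux (q x : ℚ) (h : 2 ≤ q) :
    ((q^2 - q)/2 - x) * (q + x) + 1 ≤ (q - 1)*(q + 1)/2 * (((q+1)^2 - (q+1))/2 - x) := by
  have e0 : (0:ℚ) ≤ q - 2 := by linarith
  nlinarith [sq_nonneg (4*x - (2*q^2 - 3*q - 1)),
    mul_nonneg (mul_nonneg e0 e0) (mul_nonneg e0 e0),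
    mul_nonneg (mul_nonneg e0 e0) e0, mul_nonneg e0 e0, e0]


/-- The abscissa of convergence `α^◁(F_{2,d})` as given by the paper's formula. -/
noncomputable def alphaF (d : ℕ) (hd : 2 ≤ d) : ℚ :=
  (insert (d : ℚ) ((Finset.Icc 1 (d.choose 2 - 1)).image fun j : ℕ =>
      (((d.choose 2 : ℚ) - j) * (d + j) + 1) / ((Nat.choose (d + 1) 2 : ℚ) - j))).max'
    ⟨(d : ℚ), Finset.mem_insert_self _ _⟩

theorem gss_bounds (d : ℕ) (hd : 2 ≤ d) :
    ((d : ℚ) ^ 3 - d ^ 2 + 2) / (4 * d) ≤ alphaF d hd ∧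
    alphaF d hd ≤ max (d : ℚ) (((d : ℚ) - 1) * (d + 1) / 2) := by
  have hdq : (2:ℚ) ≤ (d:ℚ) := by exact_mod_cast hd
  have hC : (d.choose 2 : ℚ) = ((d:ℚ)^2 - d)/2 := two_choose d (by omega)
  have hC' : ((d+1).choose 2 : ℚ) = (((d:ℚ)+1)^2 - ((d:ℚ)+1))/2 := by
    have := two_choose (d+1) (by omega); push_cast at this ⊢; linarith
  have hCn : 2 * d.choose 2 = d * (d - 1) := by
    rw [Nat.choose_two_right]
    refine Nat.mul_div_cancel' ?_
    rcases Nat.even_or_odd d with h | h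
    · exact h.two_dvd.mul_right _
    · exact (Nat.Odd.sub_odd h odd_one).two_dvd.mul_left _
  rw [alphaF]
  constructor
  · -- lower bound
    rcases eq_or_lt_of_le hd with h2 | h3
    · -- d = 2
      have hle : (d:ℚ) ≤ alphaF d hd :=
        Finset.le_max' _ _ (Finset.mem_insert_self _ _)
      refine le_trans ?_ hle
      rw [← h2]; norm_num
    · -- d ≥ 3, witness j0 = d*d/4 - 1
      set j0 := d*d/4 - 1 with hj0
      have hCn2 : 2 * d.choose 2 = d*d - d := by
        rw [hCn]
        have h4 : d*d = d*(d-1) + d := by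
          have : d - 1 + 1 = d := by omega
          calc d*d = d*((d-1)+1) := by rw [this]
          _ = d*(d-1) + d := by ring
        omega
      have hdd1 : 3*3 ≤ d*d := Nat.mul_le_mul h3 h3
      have hdd2 : 3*d ≤ d*d := Nat.mul_le_mul_right d h3
      have hmem : j0 ∈ Finset.Icc 1 (d.choose 2 - 1) := by
        rw [Finset.mem_Icc]; omega
      refine le_trans ?_ (Finset.le_max' _ _
        (Finset.mem_insert_of_mem (Finset.mem_image_of_mem _ hmem)))
      show ((d : ℚ) ^ 3 - d ^ 2 + 2) / (4 * d) ≤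
        (((d.choose 2 : ℚ) - j0) * ((d:ℚ) + j0) + 1) / ((Nat.choose (d + 1) 2 : ℚ) - j0)
      have hjlt : (j0:ℚ) ≤ (d.choose 2:ℚ) - 1 := by
        have hle2 : j0 ≤ d.choose 2 - 1 := (Finset.mem_Icc.mp hmem).2
        have h1 : 1 ≤ d.choose 2 := by omega
        have hc : (j0:ℚ) ≤ ((d.choose 2 - 1 : ℕ):ℚ) := by exact_mod_cast hle2
        rwa [Nat.cast_sub h1, Nat.cast_one] at hc
      have hpos : (0:ℚ) < (Nat.choose (d + 1) 2 : ℚ) - j0 := by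
        rw [hC']; rw [hC] at hjlt; nlinarith
      rw [div_le_div_iff₀ (by positivity) hpos]
      rcases Nat.even_or_odd d with ⟨m, hm⟩ | ⟨m, hm⟩
      · have hm2 : 2 ≤ m := by omega
        have hsq : d*d = 4*(m*m) := by rw [hm]; ring
        have hj0m : j0 = m*m - 1 := by omega
        have hdm : (d:ℚ) = 2*m := by rw [hm]; push_cast; ring
        have hjm : (j0:ℚ) = (m:ℚ)^2 - 1 := by
          rw [hj0m, Nat.cast_sub (by nlinarith), Nat.cast_mul]; push_cast; ring
        have hmq : (2:ℚ) ≤ (m:ℚ) := by exact_mod_cast hm2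
        rw [hC, hC', hdm, hjm]
        linarith [even_aux m hm2]
      · have hm1 : 1 ≤ m := by omega
        have hsq : d*d = 4*(m*m+m)+1 := by rw [hm]; ring
        have hj0m : j0 = m*m + m - 1 := by omega
        have hdm : (d:ℚ) = 2*m + 1 := by rw [hm]; push_cast; ring
        have hjm : (j0:ℚ) = (m:ℚ)^2 + m - 1 := by
          rw [hj0m, Nat.cast_sub (by nlinarith)]; push_cast; ring
        have hmq : (1:ℚ) ≤ (m:ℚ) := by exact_mod_cast hm1
        rw [hC, hC', hdm, hjm]
        linarith [odd_aux m hm1]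
  · apply Finset.max'_le
    intro y hy
    rcases Finset.mem_insert.mp hy with h | h
    · subst h; exact le_max_left _ _
    · refine le_trans ?_ (le_max_right _ _)
      obtain ⟨j, hj, rfl⟩ := Finset.mem_image.mp h
      rw [Finset.mem_Icc] at hj
      have hjlt : (j:ℚ) ≤ (d.choose 2:ℚ) - 1 := by
        have h1 : 1 ≤ d.choose 2 := by omega
        have : (j:ℚ) ≤ ((d.choose 2 - 1 : ℕ):ℚ) := by exact_mod_cast hj.2
        rwa [Nat.cast_sub h1, Nat.cast_one] at this
      have hpos : (0:ℚ) < (Nat.choose (d + 1) 2 : ℚ) - j := by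
        rw [hC']; rw [hC] at hjlt; nlinarith
      rw [div_le_iff₀ hpos, hC, hC']
      linarith [upper_aux (d:ℚ) (j:ℚ) hdq]
end
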